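/- arXiv:1901.01313 — 4 statements merged into one kernel-verified Lean document; each statement's English description precedes it below -/
import Mathlib

section
/- A group G has a universal central extension if and only if G is perfect. -/
universe u

/-- `p : E →* G` is a central extension: surjective with central kernel. -/
def IsCentralExtension {E G : Type u} [Group E] [Group G] (p : E →* G) : Prop :=
  Function.Surjective p ∧ p.ker ≤ Subgroup.center E

/-- `q : X →* G` is a universal central extension: it is a central extension and
every central extension of `G` factors uniquely through it. -/
def IsUniversalCentralExtension {X G : Type u} [Group X] [Group G] (q : X →* G) : Prop :=
  IsCentralExtension q ∧
    ∀ (E : Type u) [Group E] (p : E →* G), IsCentralExtension p →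
      ∃! f : X →* E, p.comp f = q

/-- `X` is centrally closed: `id : X → X` is a universal central extension. -/
def IsCentrallyClosed (X : Type u) [Group X] : Prop :=
  IsUniversalCentralExtension (MonoidHom.id X)

open scoped commutatorElement

-- forward direction
theorem fwd {G : Type u} [Group G] (X : Type u) [Group X] (q : X →* G)
    (h : IsUniversalCentralExtension q) : commutator G = ⊤ := by
  obtain ⟨⟨hsurj, hcent⟩, huniv⟩ := h
  -- the central extension X × Abelianization X
  set A := Abelianization X
  set p : X × A →* G := q.comp (MonoidHom.fst X A) with hp
  have hce : IsCentralExtension p := by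
    constructor
    · intro g
      obtain ⟨x, hx⟩ := hsurj g
      exact ⟨(x, 1), hx⟩
    · intro ⟨x, a⟩ hx
      have hx' : x ∈ q.ker := hx
      have hxc := hcent hx'
      rw [Subgroup.mem_center_iff] at hxc ⊢
      intro ⟨y, b⟩
      ext
      · exact hxc y
      · exact mul_comm b a
  obtain ⟨f, -, hf⟩ := huniv (X × A) p hce
  have h1 : p.comp ((MonoidHom.id X).prod (1 : X →* A)) = q := by
    ext x; rfl
  have h2 : p.comp ((MonoidHom.id X).prod Abelianization.of) = q := by
    ext x; rfl
  have := (hf _ h1).trans (hf _ h2).symm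
  have hXperf : commutator X = ⊤ := by
    rw [eq_top_iff]
    intro x _
    have : (1 : A) = Abelianization.of x := congrArg (fun f => (f x).2) this
    exact (QuotientGroup.eq_one_iff x).mp this.symm
  have : Subgroup.map q (commutator X) = commutator G := by
    rw [commutator_def, commutator_def, Subgroup.map_commutator,
      Subgroup.map_top_of_surjective q hsurj]
  rw [hXperf, Subgroup.map_top_of_surjective q hsurj] at this
  exact this.symm


lemma comm_mul_central_left {H : Type*} [Group H] (a b z : H)
    (hz : ∀ d : H, z * d = d * z) : ⁅a * z, b⁆ = ⁅a, b⁆ := by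
  simp only [commutatorElement_def, mul_inv_rev]
  calc a * z * b * (z⁻¹ * a⁻¹) * b⁻¹ = a * (z * b) * z⁻¹ * a⁻¹ * b⁻¹ := by group
    _ = a * (b * z) * z⁻¹ * a⁻¹ * b⁻¹ := by rw [hz b]
    _ = a * b * a⁻¹ * b⁻¹ := by group

lemma comm_mul_central_right {H : Type*} [Group H] (a b w : H)
    (hw : ∀ d : H, w * d = d * w) : ⁅a, b * w⁆ = ⁅a, b⁆ := by
  simp only [commutatorElement_def, mul_inv_rev]
  calc a * (b * w) * a⁻¹ * (w⁻¹ * b⁻¹) = a * b * (w * a⁻¹) * w⁻¹ * b⁻¹ := by group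
    _ = a * b * (a⁻¹ * w) * w⁻¹ * b⁻¹ := by rw [hw a⁻¹]
    _ = a * b * a⁻¹ * b⁻¹ := by group

lemma comm_aux {H : Type*} [Group H] (a b z w : H)
    (hz : ∀ d : H, z * d = d * z) (hw : ∀ d : H, w * d = d * w) :
    ⁅a * z, b * w⁆ = ⁅a, b⁆ := by
  rw [comm_mul_central_left _ _ _ hz, comm_mul_central_right _ _ _ hw]

section Construction
variable (G : Type u) [Group G]

def ucePi : FreeGroup G →* G := FreeGroup.lift id

lemma ucePi_surjective : Function.Surjective (ucePi G) :=
  fun g => ⟨FreeGroup.of g, by simp [ucePi]⟩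

def uceN : Subgroup (FreeGroup G) := ⁅(⊤ : Subgroup (FreeGroup G)), (ucePi G).ker⁆

instance : (uceN G).Normal := Subgroup.commutator_normal _ _

abbrev uceC : Type u := FreeGroup G ⧸ uceN G

def uceQbar : uceC G →* G :=
  QuotientGroup.lift (uceN G) (ucePi G) (fun x hx =>
    (Subgroup.commutator_le_right ⊤ (ucePi G).ker hx : x ∈ (ucePi G).ker))

lemma uceQbar_mk (x : FreeGroup G) : uceQbar G (QuotientGroup.mk x) = ucePi G x := rfl

lemma uceQbar_surjective : Function.Surjective (uceQbar G) := fun g => by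
  obtain ⟨x, hx⟩ := ucePi_surjective G g
  exact ⟨QuotientGroup.mk x, hx⟩

lemma uceKer_central : ∀ c ∈ (uceQbar G).ker, ∀ d : uceC G, c * d = d * c := by
  intro c hc d
  obtain ⟨x, rfl⟩ := QuotientGroup.mk_surjective c
  obtain ⟨y, rfl⟩ := QuotientGroup.mk_surjective d
  have hx : x ∈ (ucePi G).ker := hc
  have h1 : ⁅(x : FreeGroup G), y⁆ ∈ uceN G := by
    have : ⁅(y : FreeGroup G), x⁆ ∈ uceN G :=
      Subgroup.commutator_mem_commutator (Subgroup.mem_top y) hx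
    have h := (uceN G).inv_mem this
    rwa [commutatorElement_inv] at h
  have h2 : ⁅QuotientGroup.mk' (uceN G) x, QuotientGroup.mk' (uceN G) y⁆ = 1 := by
    rw [← map_commutatorElement]
    exact (QuotientGroup.eq_one_iff _).mpr h1
  exact commutatorElement_eq_one_iff_mul_comm.mp h2

end Construction

section Perfect
variable (G : Type u) [Group G] (hG : commutator G = ⊤)

lemma uceMap_commutator (hG : commutator G = ⊤) :
    Subgroup.map (uceQbar G) (commutator (uceC G)) = ⊤ := by
  rw [commutator_def, Subgroup.map_commutator,
    Subgroup.map_top_of_surjective _ (uceQbar_surjective G), ← commutator_def, hG]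

lemma uceDecomp (hG : commutator G = ⊤) (c : uceC G) :
    ∃ d ∈ commutator (uceC G), d⁻¹ * c ∈ (uceQbar G).ker := by
  have : uceQbar G c ∈ Subgroup.map (uceQbar G) (commutator (uceC G)) := by
    rw [uceMap_commutator G hG]; trivial
  obtain ⟨d, hd, hqd⟩ := this
  exact ⟨d, hd, by simp [MonoidHom.mem_ker, hqd]⟩

lemma ucePerfect' (hG : commutator G = ⊤) :
    ⁅commutator (uceC G), commutator (uceC G)⁆ = commutator (uceC G) := by
  apply le_antisymm (Subgroup.commutator_le_right _ _)
  rw [commutator_def]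
  apply Subgroup.commutator_le.mpr
  intro a _ b _
  obtain ⟨a', ha', hza⟩ := uceDecomp G hG a
  obtain ⟨b', hb', hzb⟩ := uceDecomp G hG b
  have hza' : ∀ d : uceC G, (a'⁻¹ * a) * d = d * (a'⁻¹ * a) := uceKer_central G _ hza
  have hzb' : ∀ d : uceC G, (b'⁻¹ * b) * d = d * (b'⁻¹ * b) := uceKer_central G _ hzb
  have : ⁅a, b⁆ = ⁅a', b'⁆ := by
    conv_lhs => rw [show a = a' * (a'⁻¹ * a) by group, show b = b' * (b'⁻¹ * b) by group]
    exact comm_aux _ _ _ _ hza' hzb'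
  rw [this]
  exact Subgroup.commutator_mem_commutator ha' hb'

lemma ucePerfect (hG : commutator G = ⊤) :
    commutator ↥(commutator (uceC G)) = ⊤ := by
  apply Subgroup.map_injective (Subgroup.subtype_injective (commutator (uceC G)))
  have htop : Subgroup.map (commutator (uceC G)).subtype ⊤ = commutator (uceC G) := by
    rw [← MonoidHom.range_eq_map, Subgroup.range_subtype]
  rw [commutator_def ↥(commutator (uceC G)), Subgroup.map_commutator, htop,
    ucePerfect' G hG]

end Perfect

theorem bwd (G : Type u) [Group G] (hG : commutator G = ⊤) :
    ∃ (X : Type u) (_ : Group X) (q : X →* G), IsUniversalCentralExtension q := by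
  classical
  set K : Subgroup (uceC G) := commutator (uceC G) with hK
  set q : ↥K →* G := (uceQbar G).comp K.subtype with hq
  refine ⟨↥K, inferInstance, q, ⟨?_, ?_⟩, ?_⟩
  · -- surjective
    intro g
    have : g ∈ Subgroup.map (uceQbar G) K := by rw [hK, uceMap_commutator G hG]; trivial
    obtain ⟨x, hx, hqx⟩ := this
    exact ⟨⟨x, hx⟩, hqx⟩
  · -- central kernel
    intro x hx
    have hx' : (x : uceC G) ∈ (uceQbar G).ker := hx
    rw [Subgroup.mem_center_iff]
    intro y
    ext
    exact (uceKer_central G _ hx' y).symm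
  · -- universal property
    intro E _ p hp
    obtain ⟨hpsurj, hpcent⟩ := hp
    -- existence
    set s : G → E := Function.surjInv hpsurj with hs
    set φ : FreeGroup G →* E := FreeGroup.lift s with hφ
    have hcomp : ∀ x, p (φ x) = ucePi G x := by
      intro x
      have : p.comp φ = ucePi G := by
        apply FreeGroup.ext_hom
        intro a
        simp [hφ, ucePi, hs, Function.surjInv_eq hpsurj]
      exact DFunLike.congr_fun this x
    have hNker : uceN G ≤ φ.ker := by
      apply Subgroup.commutator_le.mpr
      intro f _ r hr
      rw [MonoidHom.mem_ker, map_commutatorElement]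
      apply commutatorElement_eq_one_iff_mul_comm.mpr
      have : φ r ∈ p.ker := by
        rw [MonoidHom.mem_ker, hcomp r]
        exact hr
      exact Subgroup.mem_center_iff.mp (hpcent this) (φ f)
    set φbar : uceC G →* E :=
      QuotientGroup.lift (uceN G) φ (fun x hx => MonoidHom.mem_ker.mp (hNker hx)) with hφbar
    set f : ↥K →* E := φbar.comp K.subtype with hf
    have hpf : p.comp f = q := by
      ext x
      obtain ⟨y, hy⟩ := QuotientGroup.mk_surjective (x : uceC G)
      show p (φbar (x : uceC G)) = uceQbar G (x : uceC G)
      rw [← hy]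
      exact hcomp y
    -- uniqueness
    have huniq : ∀ f₁ f₂ : ↥K →* E, p.comp f₁ = q → p.comp f₂ = q → f₁ = f₂ := by
      intro f₁ f₂ h₁ h₂
      have hS : (⊤ : Subgroup ↥K) ≤ f₁.eqLocus f₂ := by
        rw [← ucePerfect G hG, commutator_eq_closure]
        apply (Subgroup.closure_le _).mpr
        rintro _ ⟨a, b, rfl⟩
        show f₁ ⁅a, b⁆ = f₂ ⁅a, b⁆
        rw [map_commutatorElement, map_commutatorElement]
        have e1a : p (f₁ a) = q a := DFunLike.congr_fun h₁ a
        have e2a : p (f₂ a) = q a := DFunLike.congr_fun h₂ a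
        have e1b : p (f₁ b) = q b := DFunLike.congr_fun h₁ b
        have e2b : p (f₂ b) = q b := DFunLike.congr_fun h₂ b
        have hz : (f₂ a)⁻¹ * f₁ a ∈ p.ker := by
          rw [MonoidHom.mem_ker, map_mul, map_inv, e1a, e2a]
          group
        have hw : (f₂ b)⁻¹ * f₁ b ∈ p.ker := by
          rw [MonoidHom.mem_ker, map_mul, map_inv, e1b, e2b]
          group
        have hz' : ∀ d : E, ((f₂ a)⁻¹ * f₁ a) * d = d * ((f₂ a)⁻¹ * f₁ a) :=
          fun d => (Subgroup.mem_center_iff.mp (hpcent hz) d).symm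
        have hw' : ∀ d : E, ((f₂ b)⁻¹ * f₁ b) * d = d * ((f₂ b)⁻¹ * f₁ b) :=
          fun d => (Subgroup.mem_center_iff.mp (hpcent hw) d).symm
        calc ⁅f₁ a, f₁ b⁆ = ⁅f₂ a * ((f₂ a)⁻¹ * f₁ a), f₂ b * ((f₂ b)⁻¹ * f₁ b)⁆ := by group
          _ = ⁅f₂ a, f₂ b⁆ := comm_aux _ _ _ _ hz' hw'
      exact MonoidHom.ext fun x => hS (Subgroup.mem_top x)
    exact ⟨f, hpf, fun g hg => huniq g f hg hpf⟩

/-- A group has a universal central extension iff it is perfect. -/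
theorem stmt_5 (G : Type u) [Group G] :
    (∃ (X : Type u) (_ : Group X) (q : X →* G), IsUniversalCentralExtension q) ↔
      commutator G = ⊤ := by
  constructor
  · rintro ⟨X, _, q, h⟩
    exact fwd X q h
  · exact bwd G
end

section
/- If q : X → G is a universal central extension, then X is centrally closed. -/
universe u

/-- The source of a universal central extension is perfect. -/
theorem perfect_of_UCE {X G : Type u} [Group X] [Group G] (q : X →* G)
    (hq : IsUniversalCentralExtension q) : commutator X = ⊤ := by
  set A := Abelianization X
  set p : X × A →* G := q.comp (MonoidHom.fst X A) with hp
  have hcentral : IsCentralExtension p := by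
    constructor
    · intro g
      obtain ⟨x, hx⟩ := hq.1.1 g
      exact ⟨(x, 1), hx⟩
    · intro ⟨x, a⟩ hx
      have hxk : x ∈ q.ker := hx
      have hxc := hq.1.2 hxk
      rw [Subgroup.mem_center_iff] at hxc ⊢
      intro ⟨y, b⟩
      exact Prod.ext (hxc y) (mul_comm b a)
  obtain ⟨f, hf, huniq⟩ := hq.2 (X × A) p hcentral
  have h1 : p.comp ((MonoidHom.id X).prod 1) = q := by ext x; simp [hp]
  have h2 : p.comp ((MonoidHom.id X).prod Abelianization.of) = q := by ext x; simp [hp]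
  have heq : (MonoidHom.id X).prod 1 = (MonoidHom.id X).prod Abelianization.of :=
    (huniq _ h1).trans (huniq _ h2).symm
  rw [eq_top_iff]
  intro x _
  have hx : (1 : A) = Abelianization.of x := congrArg (fun f => (f x).2) heq
  have : x ∈ commutator X := by
    rw [← QuotientGroup.eq_one_iff (N := commutator X) x]
    exact hx.symm
  exact this

open scoped commutatorElement

private lemma erase_central_left {E : Type u} [Group E] (c a y : E)
    (hc : ∀ g, c * g = g * c) : ⁅c * a, y⁆ = ⁅a, y⁆ := by
  simp only [commutatorElement_def, mul_inv_rev]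
  have h1 : c * (a * y * a⁻¹) = (a * y * a⁻¹) * c := hc _
  calc c * a * y * (a⁻¹ * c⁻¹) * y⁻¹ = c * (a * y * a⁻¹) * c⁻¹ * y⁻¹ := by group
    _ = (a * y * a⁻¹) * c * c⁻¹ * y⁻¹ := by rw [h1]
    _ = a * y * (a⁻¹ * y⁻¹) := by group
  group

private lemma erase_central_right {E : Type u} [Group E] (c a y : E)
    (hc : ∀ g, c * g = g * c) : ⁅y, c * a⁆ = ⁅y, a⁆ := by
  rw [← commutatorElement_inv, erase_central_left c a y hc, commutatorElement_inv]

theorem comp_central_of_UCE {X G E : Type u} [Group X] [Group G] [Group E] (q : X →* G)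
    (hq : IsUniversalCentralExtension q) (p : E →* X) (hp : IsCentralExtension p) :
    IsCentralExtension (q.comp p) := by
  refine ⟨hq.1.1.comp hp.1, ?_⟩
  intro z hz
  have hpz : p z ∈ q.ker := hz
  have hpzc : p z ∈ Subgroup.center X := hq.1.2 hpz
  -- for every e, ⁅z, e⁆ lies in the center of E
  have hcomm : ∀ e : E, ⁅z, e⁆ ∈ Subgroup.center E := by
    intro e
    apply hp.2
    have : p ⁅z, e⁆ = ⁅p z, p e⁆ := by simp [commutatorElement_def]
    rw [MonoidHom.mem_ker, this, commutatorElement_eq_one_iff_commute]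
    exact (Subgroup.mem_center_iff.mp hpzc (p e)).symm
  -- z commutes with every commutator
  have hcz : commutator E ≤ Subgroup.centralizer {z} := by
    rw [commutator_def, Subgroup.commutator_le]
    intro a _ b _
    rw [Subgroup.mem_centralizer_iff]
    intro w hw
    rw [Set.mem_singleton_iff] at hw
    rw [hw]
    have ha : ∀ g, ⁅z, a⁆ * g = g * ⁅z, a⁆ := fun g =>
      (Subgroup.mem_center_iff.mp (hcomm a) g).symm
    have hb : ∀ g, ⁅z, b⁆ * g = g * ⁅z, b⁆ := fun g =>
      (Subgroup.mem_center_iff.mp (hcomm b) g).symm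
    have key : z * ⁅a, b⁆ * z⁻¹ = ⁅a, b⁆ := by
      rw [conjugate_commutatorElement]
      have hza : z * a * z⁻¹ = ⁅z, a⁆ * a := by group
      have hzb : z * b * z⁻¹ = ⁅z, b⁆ * b := by group
      rw [hza, hzb, erase_central_left _ _ _ ha, erase_central_right _ _ _ hb]
    calc z * ⁅a, b⁆ = (z * ⁅a, b⁆ * z⁻¹) * z := by group
      _ = ⁅a, b⁆ * z := by rw [key]
  -- ker p is in the centralizer of z
  have hkz : p.ker ≤ Subgroup.centralizer {z} := by
    intro k hk
    rw [Subgroup.mem_centralizer_iff]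
    intro w hw
    rw [Set.mem_singleton_iff] at hw
    rw [hw]
    exact Subgroup.mem_center_iff.mp (hp.2 hk) z
  -- E = commutator E ⊔ ker p
  have htop : commutator E ⊔ p.ker = ⊤ := by
    have hperf := perfect_of_UCE q hq
    have hmap : Subgroup.map p (commutator E) = ⊤ := by
      rw [commutator_def, Subgroup.map_commutator, Subgroup.map_top_of_surjective p hp.1,
        ← commutator_def, hperf]
    have := Subgroup.comap_map_eq p (commutator E)
    rw [hmap, Subgroup.comap_top] at this
    exact this.symm
  -- conclude
  rw [Subgroup.mem_center_iff]
  intro g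
  have hg : g ∈ Subgroup.centralizer {z} := by
    have hgm : g ∈ commutator E ⊔ p.ker := htop ▸ Subgroup.mem_top g
    exact sup_le hcz hkz hgm
  exact (Subgroup.mem_centralizer_iff.mp hg z rfl).symm

/-- The source of a universal central extension is centrally closed. -/
theorem stmt_7 {X G : Type u} [Group X] [Group G] (q : X →* G)
    (hq : IsUniversalCentralExtension q) : IsCentrallyClosed X := by
  constructor
  · exact ⟨Function.surjective_id, by
      intro x hx
      rw [MonoidHom.mem_ker, MonoidHom.id_apply] at hx
      rw [hx]; exact Subgroup.one_mem _⟩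
  · intro E _ p hp
    obtain ⟨f, hf, huniq⟩ := hq.2 E (q.comp p) (comp_central_of_UCE q hq p hp)
    obtain ⟨g, hg, guniq⟩ := hq.2 X q hq.1
    refine ⟨f, ?_, ?_⟩
    · have h1 : q.comp (p.comp f) = q := by
        rw [← MonoidHom.comp_assoc]; exact hf
      have h2 : q.comp (MonoidHom.id X) = q := by ext; simp
      have := (guniq _ h1).trans (guniq _ h2).symm
      simpa using this
    · intro f' hf'
      apply huniq
      rw [MonoidHom.comp_assoc, hf']
      ext; simp
end

section
/- Let f : X → G and g : G → Ḡ be central extensions of groups. Then f is a universal central extension of G if and only if g ∘ f is a universal central extension of Ḡ. -/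
universe u

namespace UCEAux

open Subgroup
open scoped commutatorElement

/-- perfectness, phrased via the abelianization -/
def Pf (X : Type u) [Group X] : Prop :=
  ∀ x : X, Abelianization.of x = (1 : Abelianization X)

variable {X G H E : Type u} [Group X] [Group G] [Group H] [Group E]

lemma pf_hom {A : Type u} [CommGroup A] (hX : Pf X) (φ : X →* A) (x : X) : φ x = 1 := by
  have h := Abelianization.lift_apply_of φ x
  rw [hX x, map_one] at h
  exact h.symm

/-- lifts along a central extension out of a perfect group are unique -/
lemma uniq_lift (hX : Pf X) (p : E →* H) (hp : p.ker ≤ center E)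
    (h₁ h₂ : X →* E) (h : p.comp h₁ = p.comp h₂) : h₁ = h₂ := by
  have key : ∀ x, h₁ x * (h₂ x)⁻¹ ∈ center E := by
    intro x
    apply hp
    have hx : p (h₁ x) = p (h₂ x) := DFunLike.congr_fun h x
    simp [MonoidHom.mem_ker, hx]
  let δ : X →* center E :=
  { toFun := fun x => ⟨h₁ x * (h₂ x)⁻¹, key x⟩
    map_one' := by ext; simp
    map_mul' := by
      intro a b
      ext
      show h₁ (a * b) * (h₂ (a * b))⁻¹ = (h₁ a * (h₂ a)⁻¹) * (h₁ b * (h₂ b)⁻¹)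
      have hc := Subgroup.mem_center_iff.mp (key b)
      have e1 : h₁ (a * b) * (h₂ (a * b))⁻¹ = h₁ a * (h₁ b * (h₂ b)⁻¹) * (h₂ a)⁻¹ := by
        simp [map_mul, mul_assoc]
      rw [e1, hc (h₁ a), mul_assoc, ← hc (h₁ a * (h₂ a)⁻¹)] }
  ext x
  have h0 : δ x = 1 := by open scoped IsMulCommutative in exact pf_hom hX δ x
  have h1 : h₁ x * (h₂ x)⁻¹ = 1 := congrArg Subtype.val h0
  exact mul_inv_eq_one.mp h1

/-- uniqueness of factorizations through a central extension forces perfectness -/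
lemma factA (q : X →* H)
    (hu : ∀ (E : Type u) [Group E] (p : E →* H), IsCentralExtension p →
      ∃! f : X →* E, p.comp f = q)
    (hq : IsCentralExtension q) : Pf X := by
  let p : X × Abelianization X →* H := q.comp (MonoidHom.fst _ _)
  have hp : IsCentralExtension p := by
    constructor
    · intro h
      obtain ⟨x, hx⟩ := hq.1 h
      exact ⟨(x, 1), hx⟩
    · intro z hz
      have h1 : z.1 ∈ center X := hq.2 hz
      rw [Subgroup.mem_center_iff]
      intro w
      refine Prod.ext ?_ ?_
      · exact Subgroup.mem_center_iff.mp h1 w.1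
      · exact mul_comm w.2 z.2
  obtain ⟨k, -, hk2⟩ := hu (X × Abelianization X) p hp
  have e1 : p.comp ((MonoidHom.id X).prod 1) = q := by ext x; rfl
  have e2 : p.comp ((MonoidHom.id X).prod Abelianization.of) = q := by ext x; rfl
  have e : ((MonoidHom.id X).prod (1 : X →* Abelianization X))
      = (MonoidHom.id X).prod Abelianization.of := (hk2 _ e1).trans (hk2 _ e2).symm
  intro x
  have := congrArg (fun φ : X →* X × Abelianization X => (φ x).2) e
  simpa using this.symm

/-- in a perfect group, preimages of central elements along a central extension are central -/
lemma factB (hX : Pf X) (q : X →* G) (hker : q.ker ≤ center X) {x : X}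
    (hx : q x ∈ center G) : x ∈ center X := by
  have key : ∀ y, ⁅x, y⁆ ∈ center X := by
    intro y
    apply hker
    rw [MonoidHom.mem_ker, map_commutatorElement,
      commutatorElement_eq_one_iff_mul_comm]
    exact (Subgroup.mem_center_iff.mp hx (q y)).symm
  let c : X →* center X :=
  { toFun := fun y => ⟨⁅x, y⁆, key y⟩
    map_one' := by ext; simp
    map_mul' := by
      intro a b
      ext
      show ⁅x, a * b⁆ = ⁅x, a⁆ * ⁅x, b⁆
      have hc := Subgroup.mem_center_iff.mp (key b)
      have h1 : ⁅x, a * b⁆ = ⁅x, a⁆ * (a * ⁅x, b⁆ * a⁻¹) := by group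
      have h2 : a * ⁅x, b⁆ * a⁻¹ = ⁅x, b⁆ := by rw [hc a]; group
      rw [h1, h2] }
  rw [Subgroup.mem_center_iff]
  intro y
  have h0 : c y = 1 := by open scoped IsMulCommutative in exact pf_hom hX c y
  have h1 : ⁅x, y⁆ = 1 := congrArg Subtype.val h0
  exact (commutatorElement_eq_one_iff_mul_comm.mp h1).symm

/-- the pullback of `p` along `q`, as a subgroup of the product -/
def pb (p : E →* H) (q : G →* H) : Subgroup (E × G) where
  carrier := {z | p z.1 = q z.2}
  one_mem' := by simp
  mul_mem' := by
    intro a b ha hb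
    simp only [Set.mem_setOf_eq, Prod.fst_mul, Prod.snd_mul, map_mul] at *
    rw [ha, hb]
  inv_mem' := by
    intro a ha
    simp only [Set.mem_setOf_eq, Prod.fst_inv, Prod.snd_inv, map_inv] at *
    rw [ha]

lemma pb_snd_surj (p : E →* H) (q : G →* H) (hp : Function.Surjective p) :
    Function.Surjective ((MonoidHom.snd E G).comp (pb p q).subtype) := by
  intro s
  obtain ⟨e, he⟩ := hp (q s)
  exact ⟨⟨(e, s), he⟩, rfl⟩

lemma pb_snd_ker (p : E →* H) (q : G →* H) (hker : p.ker ≤ center E) :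
    ((MonoidHom.snd E G).comp (pb p q).subtype).ker ≤ center ↥(pb p q) := by
  intro z hz
  have h2 : (z : E × G).2 = 1 := hz
  have h1 : (z : E × G).1 ∈ p.ker := by
    rw [MonoidHom.mem_ker]
    have hm : p (z : E × G).1 = q (z : E × G).2 := z.2
    rw [hm, h2, map_one]
  have hc := Subgroup.mem_center_iff.mp (hker h1)
  rw [Subgroup.mem_center_iff]
  intro w
  refine Subtype.ext (Prod.ext ?_ ?_)
  · exact hc (w : E × G).1
  · show (w : E × G).2 * (z : E × G).2 = (z : E × G).2 * (w : E × G).2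
    rw [h2, mul_one, one_mul]

lemma map_comm_top (r : E →* X) (hr : Function.Surjective r) (hX : Pf X) :
    Subgroup.map r (commutator E) = ⊤ := by
  have hcX : commutator X = ⊤ := by
    rw [eq_top_iff]
    intro x _
    exact (QuotientGroup.eq_one_iff x).mp (hX x)
  rw [commutator_def, Subgroup.map_commutator, Subgroup.map_top_of_surjective r hr,
    ← commutator_def, hcX]

lemma comm_restrict_surj (r : E →* X) (hr : Function.Surjective r) (hX : Pf X) :
    Function.Surjective (r.comp (commutator E).subtype) := by
  intro x
  have hx : x ∈ Subgroup.map r (commutator E) := by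
    rw [map_comm_top r hr hX]; trivial
  obtain ⟨d, hd, hdx⟩ := hx
  exact ⟨⟨d, hd⟩, hdx⟩

/-- the commutator subgroup of a central extension of a perfect group is perfect -/
lemma pf_commutator (r : E →* X) (hr : Function.Surjective r) (hker : r.ker ≤ center E)
    (hX : Pf X) : Pf ↥(commutator E) := by
  have decomp : ∀ a : E, ∃ d ∈ commutator E, ∃ z, z ∈ center E ∧ a = d * z := by
    intro a
    have hx : r a ∈ Subgroup.map r (commutator E) := by
      rw [map_comm_top r hr hX]; trivial
    obtain ⟨d, hd, hdr⟩ := hx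
    refine ⟨d, hd, d⁻¹ * a, hker ?_, by group⟩
    rw [MonoidHom.mem_ker, map_mul, map_inv, hdr]
    simp
  have key1 : ∀ (d z : E), z ∈ center E → ∀ b : E, ⁅d * z, b⁆ = ⁅d, b⁆ := by
    intro d z hz b
    have h := Subgroup.mem_center_iff.mp hz b
    have hzb : z * b * z⁻¹ = b := by rw [← h]; group
    calc ⁅d * z, b⁆ = d * (z * b * z⁻¹) * d⁻¹ * b⁻¹ := by
          rw [commutatorElement_def]; group
      _ = ⁅d, b⁆ := by rw [hzb, commutatorElement_def]
  have key2 : ∀ (a d z : E), z ∈ center E → ⁅a, d * z⁆ = ⁅a, d⁆ := by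
    intro a d z hz
    have h := Subgroup.mem_center_iff.mp hz a⁻¹
    have hza : z * a⁻¹ * z⁻¹ = a⁻¹ := by rw [← h]; group
    calc ⁅a, d * z⁆ = a * d * (z * a⁻¹ * z⁻¹) * d⁻¹ := by
          rw [commutatorElement_def]; group
      _ = ⁅a, d⁆ := by rw [hza, commutatorElement_def]
  have step2 : ∀ a b : E, ⁅a, b⁆ ∈ ⁅commutator E, commutator E⁆ := by
    intro a b
    obtain ⟨d, hd, z, hz, rfl⟩ := decomp a
    obtain ⟨d', hd', z', hz', rfl⟩ := decomp b
    rw [key1 d z hz, key2 d d' z' hz']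
    exact Subgroup.commutator_mem_commutator hd hd'
  have hDle : commutator E ≤ ⁅commutator E, commutator E⁆ := by
    show ⁅(⊤ : Subgroup E), ⊤⁆ ≤ _
    exact Subgroup.commutator_le.mpr fun a _ b _ => step2 a b
  have hmap2 : ⁅commutator E, commutator E⁆
      ≤ Subgroup.map (commutator E).subtype (commutator ↥(commutator E)) := by
    rw [Subgroup.commutator_le]
    intro g₁ h₁ g₂ h₂
    refine ⟨⁅(⟨g₁, h₁⟩ : ↥(commutator E)), ⟨g₂, h₂⟩⁆,
      Subgroup.commutator_mem_commutator (Subgroup.mem_top _) (Subgroup.mem_top _), ?_⟩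
    rw [map_commutatorElement]; rfl
  intro x
  refine (QuotientGroup.eq_one_iff x).mpr ?_
  have hx : (x : E) ∈ Subgroup.map (commutator E).subtype (commutator ↥(commutator E)) :=
    hmap2 (hDle x.2)
  obtain ⟨y, hy, hxy⟩ := hx
  have hyx : y = x := Subtype.ext hxy
  exact hyx ▸ hy

end UCEAux

open UCEAux Subgroup in
/-- For central extensions `f : X →* G` and `g : G →* Ḡ`, `f` is universal iff
`g ∘ f` is universal. -/
theorem stmt_8 {X G Gbar : Type u} [Group X] [Group G] [Group Gbar]
    (f : X →* G) (g : G →* Gbar)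
    (hf : IsCentralExtension f) (hg : IsCentralExtension g) :
    IsUniversalCentralExtension f ↔ IsUniversalCentralExtension (g.comp f) := by
  constructor
  · rintro ⟨-, huniv⟩
    have hX : Pf X := factA f huniv hf
    have hgf : IsCentralExtension (g.comp f) := by
      refine ⟨hg.1.comp hf.1, ?_⟩
      intro x hx
      have h1 : f x ∈ g.ker := hx
      exact factB hX f hf.2 (hg.2 h1)
    refine ⟨hgf, fun E _ p hp => ?_⟩
    -- pull back p along g
    let P := pb p g
    let π₂ : ↥P →* G := (MonoidHom.snd E G).comp P.subtype
    have hπ : IsCentralExtension π₂ := ⟨pb_snd_surj p g hp.1, pb_snd_ker p g hp.2⟩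
    obtain ⟨h', hh', -⟩ := huniv ↥P π₂ hπ
    let h : X →* E := (MonoidHom.fst E G).comp (P.subtype.comp h')
    have hcomp : p.comp h = g.comp f := by
      ext x
      have hm : p ((h' x : E × G).1) = g ((h' x : E × G).2) := (h' x).2
      have h2 : ((h' x : E × G).2) = f x := DFunLike.congr_fun hh' x
      show p ((h' x : E × G).1) = g (f x)
      rw [hm, h2]
    exact ⟨h, hcomp, fun h₂ hh₂ => uniq_lift hX p hp.2 h₂ h (hh₂.trans hcomp.symm)⟩
  · rintro ⟨hgfc, huniv⟩
    have hX : Pf X := factA (g.comp f) huniv hgfc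
    refine ⟨hf, fun E _ p hp => ?_⟩
    -- pull back p along f
    let P := pb p f
    let π₂ : ↥P →* X := (MonoidHom.snd E X).comp P.subtype
    have hsurj : Function.Surjective π₂ := pb_snd_surj p f hp.1
    have hker : π₂.ker ≤ center ↥P := pb_snd_ker p f hp.2
    let D := _root_.commutator ↥P
    have hPf : Pf ↥D := pf_commutator π₂ hsurj hker hX
    let r : ↥D →* X := π₂.comp D.subtype
    have hrsurj : Function.Surjective r := comm_restrict_surj π₂ hsurj hX
    have hrker : r.ker ≤ center ↥D := by
      intro d hd
      have hmem : D.subtype d ∈ π₂.ker := hd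
      have hc := Subgroup.mem_center_iff.mp (hker hmem)
      rw [Subgroup.mem_center_iff]
      intro w
      exact Subtype.ext (hc (w : ↥P))
    have hGF : IsCentralExtension ((g.comp f).comp r) := by
      refine ⟨(hg.1.comp hf.1).comp hrsurj, ?_⟩
      intro d hd
      have h1 : f (r d) ∈ g.ker := hd
      exact factB hPf r hrker (factB hX f hf.2 (hg.2 h1))
    obtain ⟨k, hk, -⟩ := huniv ↥D ((g.comp f).comp r) hGF
    have hrk : r.comp k = MonoidHom.id X := by
      refine uniq_lift hX (g.comp f) hgfc.2 (r.comp k) (MonoidHom.id X) ?_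
      rw [← MonoidHom.comp_assoc, hk, MonoidHom.comp_id]
    let h : X →* E := (MonoidHom.fst E X).comp (P.subtype.comp (D.subtype.comp k))
    have hcomp : p.comp h = f := by
      ext x
      have hm : p (((k x : ↥P) : E × X).1) = f (((k x : ↥P) : E × X).2) := (k x : ↥P).2
      have h2 : (((k x : ↥P) : E × X).2) = x := DFunLike.congr_fun hrk x
      show p (((k x : ↥P) : E × X).1) = f x
      rw [hm, h2]
    exact ⟨h, hcomp, fun h₂ hh₂ => uniq_lift hX p hp.2 h₂ h (hh₂.trans hcomp.symm)⟩
end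

section
/- A surjective group homomorphism q : X → G is a universal central extension if and only if X is centrally closed and Ker(q) is contained in the center of X. -/
universe u

/-- If `q` is a universal central extension, every hom from `X` to an abelian group is trivial. -/
lemma uce_hom_to_comm_trivial {X G : Type u} [Group X] [Group G] {q : X →* G}
    (h : IsUniversalCentralExtension q) {A : Type u} [CommGroup A] (ψ : X →* A) : ψ = 1 := by
  set p : X × A →* G := q.comp (MonoidHom.fst X A) with hp_def
  have hp : IsCentralExtension p := by
    constructor
    · intro g
      obtain ⟨x, hx⟩ := h.1.1 g
      exact ⟨(x, 1), hx⟩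
    · intro z hz
      have hz1 : z.1 ∈ q.ker := hz
      have hc := h.1.2 hz1
      rw [Subgroup.mem_center_iff]
      intro b
      exact Prod.ext (Subgroup.mem_center_iff.mp hc b.1) (mul_comm b.2 z.2)
  obtain ⟨f, _, hu⟩ := h.2 (X × A) p hp
  have h1 : p.comp ((MonoidHom.id X).prod 1) = q := by ext x; rfl
  have h2 : p.comp ((MonoidHom.id X).prod ψ) = q := by ext x; rfl
  have := (hu _ h1).trans (hu _ h2).symm
  ext x
  have := congrArg (fun g => (g x).2) this
  simpa using this.symm

/-- Composition lemma: if `q` is a UCE and `p : E →* X` is a central extension,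
then `q ∘ p` is a central extension. -/
lemma uce_comp_central {X G : Type u} [Group X] [Group G] {q : X →* G}
    (h : IsUniversalCentralExtension q) {E : Type u} [Group E] {p : E →* X}
    (hp : IsCentralExtension p) : IsCentralExtension (q.comp p) := by
  constructor
  · exact h.1.1.comp hp.1
  · intro e he
    -- p e ∈ ker q, hence central in X
    have hpe : p e ∈ q.ker := he
    have hpec := h.1.2 hpe
    -- commutators [e, x] lie in ker p hence in center E
    have hcomm : ∀ x : E, e * x * e⁻¹ * x⁻¹ ∈ Subgroup.center E := by
      intro x
      apply hp.2
      have : p e * p x = p x * p e := (Subgroup.mem_center_iff.mp hpec (p x)).symm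
      simp only [MonoidHom.mem_ker, map_mul, map_inv]
      rw [this]
      group
    -- φ : E →* center E, x ↦ [e, x]
    set Z := Subgroup.center E
    have hmul : ∀ x y : E, e * (x * y) * e⁻¹ * (x * y)⁻¹ =
        (e * x * e⁻¹ * x⁻¹) * (e * y * e⁻¹ * y⁻¹) := by
      intro x y
      have hcy := Subgroup.mem_center_iff.mp (hcomm y)
      have key : y * e⁻¹ * y⁻¹ = e⁻¹ * (e * y * e⁻¹ * y⁻¹) := by group
      calc e * (x * y) * e⁻¹ * (x * y)⁻¹
          = e * x * (y * e⁻¹ * y⁻¹) * x⁻¹ := by group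
        _ = e * x * (e⁻¹ * (e * y * e⁻¹ * y⁻¹)) * x⁻¹ := by rw [key]
        _ = e * x * e⁻¹ * ((e * y * e⁻¹ * y⁻¹) * x⁻¹) := by group
        _ = e * x * e⁻¹ * (x⁻¹ * (e * y * e⁻¹ * y⁻¹)) := by rw [hcy x⁻¹]
        _ = (e * x * e⁻¹ * x⁻¹) * (e * y * e⁻¹ * y⁻¹) := by group
    let φ : E →* Z :=
      { toFun := fun x => ⟨e * x * e⁻¹ * x⁻¹, hcomm x⟩
        map_one' := by ext; simp
        map_mul' := fun x y => by ext; exact hmul x y }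
    -- φ kills ker p, so it factors through p
    have hker : p.ker ≤ φ.ker := by
      intro x hx
      have hxc := hp.2 hx
      have : e * x = x * e := Subgroup.mem_center_iff.mp hxc e
      simp only [MonoidHom.mem_ker]
      ext
      show e * x * e⁻¹ * x⁻¹ = 1
      rw [this]; group
    let finv := Function.surjInv hp.1
    have hfinv : Function.RightInverse finv p := Function.rightInverse_surjInv hp.1
    let ψ : X →* Z := p.liftOfRightInverse finv hfinv ⟨φ, hker⟩
    have hψ : ∀ x : E, ψ (p x) = φ x := fun x =>
      p.liftOfRightInverse_comp_apply finv hfinv ⟨φ, hker⟩ x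
    have hψ1 : ψ = 1 := by open IsMulCommutative in exact uce_hom_to_comm_trivial h ψ
    -- hence all commutators with e are trivial
    rw [Subgroup.mem_center_iff]
    intro x
    have : φ x = 1 := by rw [← hψ x, hψ1]; rfl
    have h1 : e * x * e⁻¹ * x⁻¹ = 1 := congrArg Subtype.val this
    have : e * x = x * e := by
      have := congrArg (fun z => z * x * e) h1
      simpa [mul_assoc] using this
    exact this.symm

/-- A surjective homomorphism `q : X →* G` is a universal central extension iff
`X` is centrally closed and `Ker q` is central in `X`. -/
theorem stmt_9 {X G : Type u} [Group X] [Group G] (q : X →* G)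
    (hs : Function.Surjective q) :
    IsUniversalCentralExtension q ↔
      (IsCentrallyClosed X ∧ q.ker ≤ Subgroup.center X) := by
  constructor
  · intro h
    refine ⟨⟨⟨Function.surjective_id, ?_⟩, ?_⟩, h.1.2⟩
    · intro x hx
      have : x = 1 := hx
      rw [this]; exact Subgroup.one_mem _
    · intro E _ p hp
      obtain ⟨f, hf, hu⟩ := h.2 E (q.comp p) (uce_comp_central h hp)
      have hqq : ∀ g : X →* E, q.comp (p.comp g) = q → p.comp g = MonoidHom.id X := by
        intro g hg
        obtain ⟨r, hr, hru⟩ := h.2 X q ⟨h.1.1, h.1.2⟩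
        have e1 : r = p.comp g := (hru _ (by rw [← MonoidHom.comp_assoc] at hg ⊢; exact hg)).symm
        have e2 : r = MonoidHom.id X := (hru _ (by ext x; rfl)).symm
        rw [← e1, e2]
      refine ⟨f, hqq f (by rw [← MonoidHom.comp_assoc]; exact hf), ?_⟩
      intro f' hf'
      exact hu f' (by show q.comp (p.comp f') = q; rw [hf']; ext x; rfl)
  · rintro ⟨hcc, hker⟩
    refine ⟨⟨hs, hker⟩, ?_⟩
    intro E _ p hp
    -- pullback subgroup
    let B : Subgroup (X × E) :=
      { carrier := {z | q z.1 = p z.2}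
        one_mem' := by simp
        mul_mem' := by intro a b ha hb; simp only [Set.mem_setOf_eq, Prod.fst_mul,
          Prod.snd_mul, map_mul] at *; rw [ha, hb]
        inv_mem' := by intro a ha; simp only [Set.mem_setOf_eq, Prod.fst_inv,
          Prod.snd_inv, map_inv] at *; rw [ha] }
    let π : ↥B →* X := (MonoidHom.fst X E).comp B.subtype
    have hπ : IsCentralExtension π := by
      constructor
      · intro x
        obtain ⟨e, he⟩ := hp.1 (q x)
        exact ⟨⟨(x, e), he.symm⟩, rfl⟩
      · intro z hz
        have hz1 : (z : X × E).1 = 1 := hz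
        have hz2 : (z : X × E).2 ∈ p.ker := by
          have := z.2
          simp only [MonoidHom.mem_ker]
          rw [← this, hz1, map_one]
        have hz2c := hp.2 hz2
        rw [Subgroup.mem_center_iff]
        intro b
        ext
        · show (b : X × E).1 * (z : X × E).1 = (z : X × E).1 * (b : X × E).1
          rw [hz1]; simp
        · exact Subgroup.mem_center_iff.mp hz2c (b : X × E).2
    obtain ⟨s, hsid, hsu⟩ := hcc.2 ↥B π hπ
    refine ⟨(MonoidHom.snd X E).comp (B.subtype.comp s), ?_, ?_⟩
    · ext x
      have h1 : ((s x : X × E)).1 = x := congrArg (fun g => g x) hsid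
      have h2 : q ((s x : X × E)).1 = p ((s x : X × E)).2 := (s x).2
      show p ((s x : X × E)).2 = q x
      rw [← h2, h1]
    · intro f' hf'
      have hmem : ∀ x, (x, f' x) ∈ B := fun x =>
        show q x = p (f' x) from (DFunLike.congr_fun hf' x).symm
      let s' : X →* ↥B :=
        { toFun := fun x => ⟨(x, f' x), hmem x⟩
          map_one' := by ext <;> simp
          map_mul' := fun x y => by ext <;> simp }
      have hss : s' = s := hsu s' (by ext x; rfl)
      ext x
      have h3 : ((s' x : X × E)).2 = ((s x : X × E)).2 :=
        congrArg (fun g => ((g x : X × E)).2) hss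
      exact h3
end
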